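/- For integers r ≥ t ≥ 0 and f ≥ 0, the one-row row-strict flagged skew factorial Schur polynomial satisfies s̃_{(r)/(t),(f)}(z|b) = e_{r−t}^{[f | r−t−f−1]}(z | τ^{−t}b), i.e. it equals the coefficient of u^{r−t} in the formal power series e_u^{[f]}(z) · e_u^{[r−t−f−1]}(τ^{−t}b). In particular, both sides vanish whenever r − t > f. -/

import Mathlib

open Finset

noncomputable section

variable {R : Type*} [CommRing R]

/-- The formal power series `1/(1 - x·u)`. -/
def geomSeries (x : R) : PowerSeries R := PowerSeries.mk fun m => x ^ m

/-- `e_u^{[k]}(c)`: the power series `∏_{i=1}^k (1 + c_i u)` for `k ≥ 0`, and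
`∏_{i=1}^{-k} (1 - c_i u)⁻¹` for `k < 0`.  The sequence `c` is read at indices `1, 2, …`. -/
def eSer (k : ℤ) (c : ℕ → R) : PowerSeries R :=
  if 0 ≤ k then ∏ i ∈ Finset.range k.toNat, (1 + PowerSeries.C (c (i + 1)) * PowerSeries.X)
  else ∏ i ∈ Finset.range (-k).toNat, geomSeries (c (i + 1))

/-- `q_u(x) = ∏_{i=1}^n (1 + x_i u)/(1 - x_i u)`, with `n` x-variables. -/
def qSer (n : ℕ) (x : ℕ → R) : PowerSeries R :=
  ∏ i ∈ Finset.range n,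
    ((1 + PowerSeries.C (x (i + 1)) * PowerSeries.X) * geomSeries (x (i + 1)))

/-- The coefficient of `u^m` (`m : ℤ`) of a power series; zero when `m < 0`. -/
def coeffZ (m : ℤ) (φ : PowerSeries R) : R :=
  if 0 ≤ m then PowerSeries.coeff m.toNat φ else 0

/-- `q_m^{[ℓ]}(x|c)`: the coefficient of `u^m` in `q_u(x)·e_u^{[ℓ]}(c)`. -/
def qC (m ℓ : ℤ) (n : ℕ) (x c : ℕ → R) : R := coeffZ m (qSer n x * eSer ℓ c)

/-- `q_m^{[k|ℓ]}(x;z|c)`: the coefficient of `u^m` in `q_u(x)·e_u^{[k]}(z)·e_u^{[ℓ]}(c)`. -/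
def qC2 (m k ℓ : ℤ) (n : ℕ) (x z c : ℕ → R) : R :=
  coeffZ m (qSer n x * eSer k z * eSer ℓ c)

/-- `e_m^{[k]}(c)`. -/
def eC (m k : ℤ) (c : ℕ → R) : R := coeffZ m (eSer k c)

/-- `e_m^{[k|ℓ]}(z|c)`: the coefficient of `u^m` in `e_u^{[k]}(z)·e_u^{[ℓ]}(c)`. -/
def eC2 (m k ℓ : ℤ) (z c : ℕ → R) : R := coeffZ m (eSer k z * eSer ℓ c)

/-- Extension of `b` to all integer indices using the convention `b_{-i} = -b_{i+1}` for
`i ≥ 0`; positive indices are untouched.  This also implements the `⋆` substitution. -/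
def bext (b : ℤ → R) : ℤ → R := fun j => if 0 < j then b j else -b (1 - j)

/-- `ε(0) = 1` and `ε(m) = 2·(-1)^m` for `m ≥ 1`. -/
def pfEps (m : ℕ) : ℤ := if m = 0 then 1 else 2 * (-1) ^ m

/-- The subscript `α_i + Σ_{j>i} m_{ij} − Σ_{j<i} m_{ji}` in the Schur–Pfaffian. -/
def pfIdx {r : ℕ} (α : Fin r → ℤ) (m : Fin r → Fin r → ℕ) (i : Fin r) : ℤ :=
  α i + ∑ j, (if i < j then (m i j : ℤ) else 0) - ∑ j, (if j < i then (m j i : ℤ) else 0)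

/-- The Schur–Pfaffian `Pf[c^{(1)}_{α_1} ⋯ c^{(r)}_{α_r}]`, as the (finitely supported) sum
over tuples of nonnegative integers `(m_{ij})_{1 ≤ i < j ≤ r}`. -/
def schurPf {r : ℕ} (c : Fin r → ℤ → R) (α : Fin r → ℤ) : R :=
  ∑ᶠ m ∈ {m : Fin r → Fin r → ℕ | ∀ i j, ¬ i < j → m i j = 0},
    (∏ i, ∏ j, if i < j then (pfEps (m i j) : R) else 1) * ∏ i, c i (pfIdx α m i)

/-- The alphabet of primed, unmarked and circled numbers. -/
inductive MSTEntry where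
  | prime : ℕ → MSTEntry
  | unmarked : ℕ → MSTEntry
  | circ : ℕ → MSTEntry
deriving DecidableEq

namespace MSTEntry

/-- Whether an entry is circled (`1`) or not (`0`). -/
def isCirc : MSTEntry → ℕ
  | circ _ => 1
  | _ => 0

/-- Key realizing the order `1' < 1 < 2' < 2 < ⋯` within each class. -/
def key : MSTEntry → ℕ
  | prime k => 2 * k - 1
  | unmarked k => 2 * k
  | circ k => k

/-- The numeric value of an entry. -/
def val : MSTEntry → ℕ
  | prime k => k
  | unmarked k => k
  | circ k => k

/-- The total order `1' < 1 < 2' < 2 < ⋯ < 1° < 2° < ⋯` on entries of positive value. -/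
def le (a b : MSTEntry) : Prop :=
  a.isCirc < b.isCirc ∨ (a.isCirc = b.isCirc ∧ a.key ≤ b.key)

end MSTEntry

/-- The shifted Young diagram of a strict partition `λ` of length `r`:
boxes `(i, j)` with `1 ≤ i ≤ r` and `i ≤ j ≤ λ_i + i - 1` (rows and columns 1-indexed). -/
def shiftedDiag (r : ℕ) (lam : ℕ → ℕ) : Set (ℕ × ℕ) :=
  {p | 1 ≤ p.1 ∧ p.1 ≤ r ∧ p.1 ≤ p.2 ∧ p.2 ≤ lam p.1 + p.1 - 1}

/-- `T` is a marked shifted tableau of the flagged strict partition `(λ, f)` whose unmarked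
and primed entries have numeric value at most `n` (normalized to `unmarked 0` off the
diagram). -/
def IsMST (n r : ℕ) (lam f : ℕ → ℕ) (T : ℕ × ℕ → MSTEntry) : Prop :=
  (∀ p, p ∉ shiftedDiag r lam → T p = .unmarked 0) ∧
  (∀ p ∈ shiftedDiag r lam, 1 ≤ (T p).val) ∧
  (∀ i j j', (i, j) ∈ shiftedDiag r lam → (i, j') ∈ shiftedDiag r lam → j ≤ j' →
    (T (i, j)).le (T (i, j'))) ∧
  (∀ i i' j, (i, j) ∈ shiftedDiag r lam → (i', j) ∈ shiftedDiag r lam → i ≤ i' →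
    (T (i, j)).le (T (i', j))) ∧
  (∀ i i' j k k', (i, j) ∈ shiftedDiag r lam → (i', j) ∈ shiftedDiag r lam → i < i' →
    T (i, j) = .unmarked k → T (i', j) = .unmarked k' → k < k') ∧
  (∀ i j j' k k', (i, j) ∈ shiftedDiag r lam → (i, j') ∈ shiftedDiag r lam → j < j' →
    T (i, j) = .prime k → T (i, j') = .prime k' → k < k') ∧
  (∀ i j j' k k', (i, j) ∈ shiftedDiag r lam → (i, j') ∈ shiftedDiag r lam → j < j' →
    T (i, j) = .circ k → T (i, j') = .circ k' → k < k') ∧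
  (∀ p ∈ shiftedDiag r lam, (T p).le (.circ (f p.1))) ∧
  (∀ p ∈ shiftedDiag r lam, ∀ k, (T p = .unmarked k ∨ T p = .prime k) → k ≤ n)

/-- The factor of the weight `(xz|b)^T` contributed by the entry at box `p`.  The convention
`b_{-i} = -b_{i+1}` is implemented by `bext`. -/
def mstFactor (x z : ℕ → R) (b : ℤ → R) (p : ℕ × ℕ) : MSTEntry → R
  | .unmarked k => x k + bext b ((p.2 : ℤ) - (p.1 : ℤ))
  | .prime k => x k - bext b ((p.2 : ℤ) - (p.1 : ℤ))
  | .circ k => z k + bext b ((k : ℤ) + (p.1 : ℤ) - (p.2 : ℤ))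

/-- The weight `(xz|b)^T` of a marked shifted tableau. -/
def mstWeight (r : ℕ) (lam : ℕ → ℕ) (x z : ℕ → R) (b : ℤ → R) (T : ℕ × ℕ → MSTEntry) : R :=
  ∏ i ∈ Finset.range r, ∏ j ∈ Finset.range (lam (i + 1)),
    mstFactor x z b (i + 1, i + 1 + j) (T (i + 1, i + 1 + j))

/-- The flagged factorial Q-function `Q_{λ,f}(x;z|b)`, with `n` x-variables. -/
def Qflag (n r : ℕ) (lam f : ℕ → ℕ) (x z : ℕ → R) (b : ℤ → R) : R :=
  ∑ᶠ T ∈ {T : ℕ × ℕ → MSTEntry | IsMST n r lam f T}, mstWeight r lam x z b T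

/-- Ivanov's factorial Q-function `Q_λ(x|b)`: the case of the zero flag (no circled
entries, so the z-variables do not occur). -/
def QIvanov (n r : ℕ) (lam : ℕ → ℕ) (x : ℕ → R) (b : ℤ → R) : R :=
  Qflag n r lam (fun _ => 0) x (fun _ => 0) b

/-- The skew Young diagram `κ/ν`: boxes `(i, j)` with `1 ≤ i ≤ r`, `ν_i < j ≤ κ_i`. -/
def skewDiag (r : ℕ) (kap nu : ℕ → ℕ) : Set (ℕ × ℕ) :=
  {p | 1 ≤ p.1 ∧ p.1 ≤ r ∧ nu p.1 < p.2 ∧ p.2 ≤ kap p.1}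

/-- `t` is a row-strict flagged tableau of `(κ/ν, f)` (normalized to `0` off the diagram). -/
def IsRST (r : ℕ) (kap nu f : ℕ → ℕ) (t : ℕ × ℕ → ℕ) : Prop :=
  (∀ p, p ∉ skewDiag r kap nu → t p = 0) ∧
  (∀ p ∈ skewDiag r kap nu, 1 ≤ t p) ∧
  (∀ i j j', (i, j) ∈ skewDiag r kap nu → (i, j') ∈ skewDiag r kap nu → j < j' →
    t (i, j) < t (i, j')) ∧
  (∀ i i' j, (i, j) ∈ skewDiag r kap nu → (i', j) ∈ skewDiag r kap nu → i ≤ i' →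
    t (i, j) ≤ t (i', j)) ∧
  (∀ p ∈ skewDiag r kap nu, t p ≤ f p.1)

/-- The weight `∏_{e ∈ T} (z_{|e|} + b_{|e| + r(e) - c(e)})` of a row-strict flagged tableau. -/
def rstWeight (r : ℕ) (kap nu : ℕ → ℕ) (z : ℕ → R) (b : ℤ → R) (t : ℕ × ℕ → ℕ) : R :=
  ∏ i ∈ Finset.range r, ∏ j ∈ Finset.range (kap (i + 1) - nu (i + 1)),
    (z (t (i + 1, nu (i + 1) + 1 + j)) +
      b ((t (i + 1, nu (i + 1) + 1 + j) : ℤ) + ((i : ℤ) + 1) - ((nu (i + 1) : ℤ) + 1 + (j : ℤ))))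

/-- The row-strict flagged skew factorial Schur polynomial `s̃_{κ/ν,f}(z|b)`. -/
def sTilde (r : ℕ) (kap nu f : ℕ → ℕ) (z : ℕ → R) (b : ℤ → R) : R :=
  ∑ᶠ t ∈ {t : ℕ × ℕ → ℕ | IsRST r kap nu f t}, rstWeight r kap nu z b t

/-!
Reading off its single row identifies a tableau of `(t + m)/(t)` with a strictly increasing
`m`-tuple in `[1, f]`, so `s̃` becomes a sum over such tuples. Splitting off whether the last
entry equals `f + 1` gives a Pascal-type recursion in `f`; the coefficient
`e_m^{[f|m-f-1]}(z|c)` obeys the same recursion for `m ≤ f` (multiply by `1 + z_{f+1} u`,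
divide out `(1 - c_{f+1-m} u)⁻¹`) and vanishes for `m > f`, where it is the coefficient of `u^m`
in a polynomial of degree `m - 1`.
-/

open PowerSeries

lemma coeff_succ_mul_one_add_C_mul_X (φ : PowerSeries R) (a : R) (n : ℕ) :
    coeff (n + 1) (φ * (1 + C a * X)) = coeff (n + 1) φ + a * coeff n φ := by
  rw [mul_add, mul_one, mul_left_comm, map_add, coeff_C_mul, coeff_succ_mul_X]

lemma geomSeries_eq_one_add (x : R) : geomSeries x = 1 + C x * X * geomSeries x := by
  ext (_ | n)
  · simp [geomSeries]
  · simp [geomSeries, mul_assoc, coeff_succ_X_mul, pow_succ', coeff_one]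

lemma coeff_succ_mul_geomSeries (φ : PowerSeries R) (x : R) (n : ℕ) :
    coeff (n + 1) (φ * geomSeries x) = coeff (n + 1) φ + x * coeff n (φ * geomSeries x) := by
  conv_lhs => rw [geomSeries_eq_one_add, mul_add, mul_one]
  rw [map_add, show φ * (C x * X * geomSeries x) = C x * (φ * geomSeries x * X) by ring,
    coeff_C_mul, coeff_succ_mul_X]

lemma eSer_natCast (k : ℕ) (c : ℕ → R) :
    eSer (k : ℤ) c = ∏ i ∈ range k, (1 + C (c (i + 1)) * X) := by
  simp [eSer]

lemma eSer_neg_natCast (k : ℕ) (c : ℕ → R) :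
    eSer (-(k : ℤ)) c = ∏ i ∈ range k, geomSeries (c (i + 1)) := by
  rcases k with _ | k
  · simp [eSer]
  · rw [eSer, if_neg (by omega)]
    simp

lemma eSer_natCast_eq_coe (k : ℕ) (c : ℕ → R) :
    eSer (k : ℤ) c =
      ((∏ i ∈ range k, (1 + Polynomial.C (c (i + 1)) * Polynomial.X) : Polynomial R) :
        PowerSeries R) := by
  rw [eSer_natCast, ← Polynomial.coeToPowerSeries.ringHom_apply, map_prod]
  simp [Polynomial.coeToPowerSeries.ringHom_apply]

lemma natDegree_prod_one_add_C_mul_X_le (k : ℕ) (c : ℕ → R) :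
    (∏ i ∈ range k, (1 + Polynomial.C (c (i + 1)) * Polynomial.X)).natDegree ≤ k := by
  refine (Polynomial.natDegree_prod_le _ _).trans ?_
  refine (Finset.sum_le_card_nsmul (range k) _ 1 fun i _ => ?_).trans (by simp)
  compute_degree

lemma coeff_eSer_mul_eSer_eq_zero {k ℓ n : ℕ} (h : k + ℓ < n) (z c : ℕ → R) :
    coeff n (eSer (k : ℤ) z * eSer (ℓ : ℤ) c) = 0 := by
  rw [eSer_natCast_eq_coe, eSer_natCast_eq_coe, ← Polynomial.coe_mul, Polynomial.coeff_coe]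
  refine Polynomial.coeff_eq_zero_of_natDegree_lt ((Polynomial.natDegree_mul_le).trans_lt ?_)
  have := natDegree_prod_one_add_C_mul_X_le k z
  have := natDegree_prod_one_add_C_mul_X_le ℓ c
  omega

lemma constantCoeff_eSer (k : ℤ) (c : ℕ → R) : constantCoeff (eSer k c) = 1 := by
  unfold eSer
  split <;> simp [geomSeries]

section OneRowE

def oneRowE (z c : ℕ → R) (m f : ℕ) : R := eC2 (m : ℤ) (f : ℤ) ((m : ℤ) - f - 1) z c

variable (z c : ℕ → R)

lemma oneRowE_eq_coeff (m f : ℕ) :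
    oneRowE z c m f = coeff m (eSer (f : ℤ) z * eSer ((m : ℤ) - f - 1) c) := by
  simp [oneRowE, eC2, coeffZ]

lemma oneRowE_zero (f : ℕ) : oneRowE z c 0 f = 1 := by
  rw [oneRowE_eq_coeff, Nat.cast_zero, coeff_zero_eq_constantCoeff_apply, map_mul,
    constantCoeff_eSer, constantCoeff_eSer, mul_one]

lemma oneRowE_eq_zero {m f : ℕ} (h : f < m) : oneRowE z c m f = 0 := by
  rw [oneRowE_eq_coeff, show (m : ℤ) - f - 1 = ((m - f - 1 : ℕ) : ℤ) by omega]
  exact coeff_eSer_mul_eSer_eq_zero (by omega) z c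

lemma oneRowE_succ_succ {m f : ℕ} (hm : m ≤ f) :
    oneRowE z c (m + 1) (f + 1) =
      oneRowE z c (m + 1) f + (z (f + 1) + c (f + 1 - m)) * oneRowE z c m f := by
  obtain ⟨d, rfl⟩ := Nat.exists_eq_add_of_le hm
  have hE₁ : ((m + 1 : ℕ) : ℤ) - ((m + d + 1 : ℕ) : ℤ) - 1 = -((d + 1 : ℕ) : ℤ) := by omega
  have hE₂ : ((m + 1 : ℕ) : ℤ) - ((m + d : ℕ) : ℤ) - 1 = -(d : ℤ) := by omega
  have hE₃ : ((m : ℕ) : ℤ) - ((m + d : ℕ) : ℤ) - 1 = -((d + 1 : ℕ) : ℤ) := by omega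
  simp only [oneRowE_eq_coeff, hE₁, hE₂, hE₃, eSer_natCast, eSer_neg_natCast,
    Finset.prod_range_succ _ (m + d), Finset.prod_range_succ _ d]
  rw [show m + d + 1 - m = d + 1 by omega]
  set A := ∏ i ∈ range (m + d), (1 + C (z (i + 1)) * X)
  set G := ∏ i ∈ range d, geomSeries (c (i + 1))
  rw [show A * (1 + C (z (m + d + 1)) * X) * (G * geomSeries (c (d + 1))) =
      A * (G * geomSeries (c (d + 1))) * (1 + C (z (m + d + 1)) * X) by ring,
    coeff_succ_mul_one_add_C_mul_X, ← mul_assoc, coeff_succ_mul_geomSeries]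
  ring

end OneRowE

section IncrTuples

def incrTuples (m f : ℕ) : Finset (Fin m → ℕ) :=
  (Fintype.piFinset fun _ => Icc 1 f).filter StrictMono

def tupleWeight (z : ℕ → R) (b : ℤ → R) {m : ℕ} (a : Fin m → ℕ) : R :=
  ∏ j, (z (a j) + b ((a j : ℤ) - j))

lemma mem_incrTuples {m f : ℕ} {a : Fin m → ℕ} :
    a ∈ incrTuples m f ↔ StrictMono a ∧ ∀ j, 1 ≤ a j ∧ a j ≤ f := by
  simp [incrTuples, and_comm]

lemma strictMono_snoc {m x : ℕ} {v : Fin m → ℕ} (hv : StrictMono v) (hx : ∀ j, v j < x) :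
    StrictMono (Fin.snoc v x : Fin (m + 1) → ℕ) := by
  intro i j hij
  induction j using Fin.lastCases with
  | last =>
    obtain ⟨i, rfl⟩ := Fin.exists_castSucc_eq.mpr hij.ne
    simpa using hx i
  | cast j =>
    obtain ⟨i, rfl⟩ := Fin.exists_castSucc_eq.mpr (hij.trans (Fin.castSucc_lt_last j)).ne
    simpa using hv (Fin.castSucc_lt_castSucc_iff.mp hij)

variable (z : ℕ → R) (b : ℤ → R)

lemma sum_incrTuples_zero (f : ℕ) : ∑ a ∈ incrTuples 0 f, tupleWeight z b a = 1 := by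
  rw [show incrTuples 0 f = {Fin.elim0} from
    Finset.eq_singleton_iff_unique_mem.mpr
      ⟨mem_incrTuples.mpr ⟨fun i => i.elim0, fun i => i.elim0⟩,
        fun a _ => Subsingleton.elim _ _⟩]
  simp [tupleWeight]

lemma incrTuples_succ_zero (m : ℕ) : incrTuples (m + 1) 0 = ∅ := by
  simp [incrTuples]

lemma filter_incrTuples_last_ne (m f : ℕ) :
    (incrTuples (m + 1) (f + 1)).filter (fun a => a (Fin.last m) ≠ f + 1) =
      incrTuples (m + 1) f := by
  ext a
  simp only [Finset.mem_filter, mem_incrTuples]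
  constructor
  · rintro ⟨⟨hmono, hbd⟩, hlast⟩
    refine ⟨hmono, fun j => ⟨(hbd j).1, ?_⟩⟩
    have := hmono.monotone (Fin.le_last j)
    have := (hbd (Fin.last m)).2
    omega
  · rintro ⟨hmono, hbd⟩
    exact ⟨⟨hmono, fun j => ⟨(hbd j).1, (hbd j).2.trans f.le_succ⟩⟩,
      by have := (hbd (Fin.last m)).2; omega⟩

lemma sum_filter_incrTuples_last_eq (m f : ℕ) :
    ∑ a ∈ (incrTuples (m + 1) (f + 1)).filter (fun a => a (Fin.last m) = f + 1),
        tupleWeight z b a =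
      (z (f + 1) + b ((f + 1 : ℕ) - m)) * ∑ a ∈ incrTuples m f, tupleWeight z b a := by
  rw [Finset.mul_sum]
  refine Finset.sum_nbij' Fin.init (fun v => Fin.snoc v (f + 1)) ?_ ?_ ?_ ?_ ?_
  · intro a ha
    simp only [Finset.mem_filter, mem_incrTuples] at ha
    obtain ⟨⟨hmono, hbd⟩, hlast⟩ := ha
    refine mem_incrTuples.mpr ⟨hmono.comp Fin.strictMono_castSucc, fun j => ⟨(hbd _).1, ?_⟩⟩
    have := hmono (Fin.castSucc_lt_last j)
    simp only [Fin.init]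
    omega
  · intro v hv
    obtain ⟨hmono, hbd⟩ := mem_incrTuples.mp hv
    simp only [Finset.mem_filter, mem_incrTuples, Fin.snoc_last, and_true]
    refine ⟨strictMono_snoc hmono fun j => by have := hbd j; omega, fun j => ?_⟩
    induction j using Fin.lastCases with
    | last => simp
    | cast j => simpa using ⟨(hbd j).1, (hbd j).2.trans f.le_succ⟩
  · intro a ha
    simp only [Finset.mem_filter] at ha
    simpa [ha.2] using Fin.snoc_init_self a
  · intro v _
    exact Fin.init_snoc _ _
  · intro a ha
    simp only [Finset.mem_filter] at ha
    rw [tupleWeight, Fin.prod_univ_castSucc, mul_comm, ha.2]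
    simp [tupleWeight, Fin.init]

lemma sum_incrTuples_succ_succ (m f : ℕ) :
    ∑ a ∈ incrTuples (m + 1) (f + 1), tupleWeight z b a =
      ∑ a ∈ incrTuples (m + 1) f, tupleWeight z b a +
        (z (f + 1) + b ((f + 1 : ℕ) - m)) * ∑ a ∈ incrTuples m f, tupleWeight z b a := by
  rw [← Finset.sum_filter_not_add_sum_filter _ (fun a => a (Fin.last m) = f + 1),
    filter_incrTuples_last_ne, sum_filter_incrTuples_last_eq]

end IncrTuples

theorem sum_incrTuples_eq_oneRowE (z : ℕ → R) (b : ℤ → R) (m f : ℕ) :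
    ∑ a ∈ incrTuples m f, tupleWeight z b a = oneRowE z (fun i => b i) m f := by
  induction f generalizing m with
  | zero =>
    rcases m with _ | m
    · rw [sum_incrTuples_zero, oneRowE_zero]
    · rw [incrTuples_succ_zero, Finset.sum_empty, oneRowE_eq_zero _ _ m.succ_pos]
  | succ f ih =>
    rcases m with _ | m
    · rw [sum_incrTuples_zero, oneRowE_zero]
    rw [sum_incrTuples_succ_succ, ih, ih]
    rcases le_or_gt m f with hm | hm
    · rw [oneRowE_succ_succ _ _ hm, Nat.cast_sub (by omega)]
    · rw [oneRowE_eq_zero _ _ hm, oneRowE_eq_zero _ _ (by omega : f < m + 1),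
        oneRowE_eq_zero _ _ (by omega : f + 1 < m + 1), mul_zero, add_zero]

section OneRowTableau

variable {t m f : ℕ}

lemma mem_skewDiag_one_iff {r : ℕ} {p : ℕ × ℕ} :
    p ∈ skewDiag 1 (fun _ => r) (fun _ => t) ↔ p.1 = 1 ∧ t < p.2 ∧ p.2 ≤ r := by
  simp only [skewDiag, Set.mem_ofPred_eq]
  omega

lemma mem_skewDiag_one_iff_exists {p : ℕ × ℕ} :
    p ∈ skewDiag 1 (fun _ => t + m) (fun _ => t) ↔ ∃ j : Fin m, p = (1, t + 1 + j) := by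
  rw [mem_skewDiag_one_iff]
  constructor
  · rintro ⟨h1, h2, h3⟩
    exact ⟨⟨p.2 - t - 1, by omega⟩, Prod.ext h1 (by simp; omega)⟩
  · rintro ⟨j, rfl⟩
    exact ⟨rfl, by omega, by omega⟩

def oneRowTableau (t : ℕ) {m : ℕ} (a : Fin m → ℕ) : ℕ × ℕ → ℕ := fun p =>
  if h : p.1 = 1 ∧ t < p.2 ∧ p.2 ≤ t + m then a ⟨p.2 - t - 1, by omega⟩ else 0

lemma oneRowTableau_apply_box (a : Fin m → ℕ) (j : Fin m) :
    oneRowTableau t a (1, t + 1 + j) = a j := by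
  rw [oneRowTableau, dif_pos ⟨rfl, by omega, by omega⟩]
  congr
  simp only
  omega

lemma oneRowTableau_of_notMem (a : Fin m → ℕ) {p : ℕ × ℕ}
    (hp : p ∉ skewDiag 1 (fun _ => t + m) (fun _ => t)) : oneRowTableau t a p = 0 :=
  dif_neg (mt mem_skewDiag_one_iff.mpr hp)

lemma isRST_oneRowTableau {a : Fin m → ℕ} (ha : a ∈ incrTuples m f) :
    IsRST 1 (fun _ => t + m) (fun _ => t) (fun _ => f) (oneRowTableau t a) := by
  obtain ⟨hmono, hbd⟩ := mem_incrTuples.mp ha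
  simp only [IsRST, mem_skewDiag_one_iff_exists]
  refine ⟨fun p hp => oneRowTableau_of_notMem a (mt mem_skewDiag_one_iff_exists.mp hp), ?_, ?_,
    ?_, ?_⟩
  · rintro _ ⟨j, rfl⟩
    simpa [oneRowTableau_apply_box] using (hbd j).1
  · rintro i _ _ ⟨j, hj⟩ ⟨j', hj'⟩ hjj'
    simp only [Prod.mk.injEq] at hj hj'
    rw [hj.1, hj.2, hj'.2, oneRowTableau_apply_box, oneRowTableau_apply_box]
    exact hmono (by omega)
  · rintro i i' _ ⟨j, hj⟩ ⟨j', hj'⟩ -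
    simp only [Prod.mk.injEq] at hj hj'
    rw [hj.1, hj'.1]
  · rintro _ ⟨j, rfl⟩
    simpa [oneRowTableau_apply_box] using (hbd j).2

lemma eq_oneRowTableau_of_isRST {T : ℕ × ℕ → ℕ}
    (hT : IsRST 1 (fun _ => t + m) (fun _ => t) (fun _ => f) T) :
    (fun j : Fin m => T (1, t + 1 + j)) ∈ incrTuples m f ∧
      oneRowTableau t (fun j : Fin m => T (1, t + 1 + j)) = T := by
  obtain ⟨hzero, hpos, hrow, -, hflag⟩ := hT
  have hbox (j : Fin m) : (1, t + 1 + (j : ℕ)) ∈ skewDiag 1 (fun _ => t + m) (fun _ => t) :=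
    mem_skewDiag_one_iff_exists.mpr ⟨j, rfl⟩
  refine ⟨mem_incrTuples.mpr ⟨fun j j' hjj' => hrow _ _ _ (hbox j) (hbox j') ?_,
    fun j => ⟨hpos _ (hbox j), hflag _ (hbox j)⟩⟩, funext fun p => ?_⟩
  · simpa using Fin.lt_def.mp hjj'
  by_cases hp : p ∈ skewDiag 1 (fun _ => t + m) (fun _ => t)
  · obtain ⟨j, rfl⟩ := mem_skewDiag_one_iff_exists.mp hp
    exact oneRowTableau_apply_box _ j
  · rw [oneRowTableau_of_notMem _ hp, hzero p hp]

lemma setOf_isRST_one_eq_image :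
    {T | IsRST 1 (fun _ => t + m) (fun _ => t) (fun _ => f) T} =
      oneRowTableau t '' (incrTuples m f : Set (Fin m → ℕ)) := by
  ext T
  refine ⟨fun hT => ⟨_, (eq_oneRowTableau_of_isRST hT).1, (eq_oneRowTableau_of_isRST hT).2⟩, ?_⟩
  rintro ⟨a, ha, rfl⟩
  exact isRST_oneRowTableau ha

lemma injective_oneRowTableau : Function.Injective (oneRowTableau t : (Fin m → ℕ) → _) :=
  fun a a' h => funext fun j => by
    simpa only [oneRowTableau_apply_box] using congrFun h (1, t + 1 + j)

lemma rstWeight_oneRowTableau (z : ℕ → R) (b : ℤ → R) (a : Fin m → ℕ) :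
    rstWeight 1 (fun _ => t + m) (fun _ => t) z b (oneRowTableau t a) =
      tupleWeight z (fun i => b (i - t)) a := by
  rw [rstWeight, Finset.prod_range_one, Nat.add_sub_cancel_left, ← Fin.prod_univ_eq_prod_range]
  refine Finset.prod_congr rfl fun j _ => ?_
  rw [oneRowTableau_apply_box]
  congr 2
  push_cast
  ring

lemma sTilde_one_eq_sum (z : ℕ → R) (b : ℤ → R) :
    sTilde 1 (fun _ => t + m) (fun _ => t) (fun _ => f) z b =
      ∑ a ∈ incrTuples m f, tupleWeight z (fun i => b (i - t)) a := by
  rw [sTilde, setOf_isRST_one_eq_image, finsum_mem_image injective_oneRowTableau.injOn,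
    finsum_mem_coe_finset]
  exact Finset.sum_congr rfl fun a _ => rstWeight_oneRowTableau z b a

end OneRowTableau

/-- One-row case: for `0 ≤ t ≤ r` and `f ≥ 0`,
`s̃_{(r)/(t),(f)}(z|b) = e_{r−t}^{[f|r−t−f−1]}(z|τ^{−t}b)`. -/
theorem statement_4 (R : Type*) [CommRing R] (r t f : ℕ) (ht : t ≤ r)
    (z : ℕ → R) (b : ℤ → R) :
    sTilde 1 (fun _ => r) (fun _ => t) (fun _ => f) z b =
      eC2 ((r : ℤ) - (t : ℤ)) (f : ℤ) ((r : ℤ) - (t : ℤ) - (f : ℤ) - 1) z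
        (fun i => b ((i : ℤ) - (t : ℤ))) := by
  obtain ⟨m, rfl⟩ := Nat.exists_eq_add_of_le ht
  rw [sTilde_one_eq_sum, sum_incrTuples_eq_oneRowE, oneRowE,
    show ((t + m : ℕ) : ℤ) - t = m by omega]
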